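/- Let N = 2^J, let x ∈ ℝ^N, and let x̂ = F_N x. For every j with 0 ≤ j ≤ J-1, the first half x_0^(j+1) = (x_k^(j+1))_{k=0}^{2^j-1} of the periodization x^(j+1) is recovered from the odd-indexed samples y^(j) = (x̂_{2^{J-j-1}(2k+1)})_{k=0}^{2^j-1} by x_0^(j+1) = (1/2)( diag(ω_{2^{j+1}}^{-ℓ})_{ℓ=0}^{2^j-1} · F_{2^j}^{-1} · y^(j) + x^(j) ), and the second half satisfies x_1^(j+1) = x^(j) − x_0^(j+1), where x_1^(j+1) = (x_k^(j+1))_{k=2^j}^{2^{j+1}-1}. -/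

import Mathlib

open Complex Finset

/-- `ω_M = e^{-2πi/M}`. -/
noncomputable def dftOmega (M : ℕ) : ℂ := Complex.exp (-2 * Real.pi * Complex.I / M)

/-- Discrete Fourier transform of length `M`: `(F_M v)_k = Σ_{r<M} ω_M^{k r} v_r`. -/
noncomputable def dft (M : ℕ) (v : ℕ → ℂ) (k : ℕ) : ℂ :=
  ∑ r ∈ Finset.range M, dftOmega M ^ (k * r) * v r

/-- The `2^j`-periodization of a vector `x ∈ ℝ^{2^J}`:
`x^(j)_k = Σ_{ℓ < 2^{J-j}} x_{k + 2^j ℓ}`. -/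
noncomputable def periodization (J j : ℕ) (x : ℕ → ℝ) (k : ℕ) : ℝ :=
  ∑ ℓ ∈ Finset.range (2 ^ (J - j)), x (k + 2 ^ j * ℓ)
/-- The Fourier matrix `F_M = (ω_M^{pq})_{p,q=0}^{M-1}`. -/
noncomputable def fourierMatrix (M : ℕ) : Matrix (Fin M) (Fin M) ℂ :=
  fun p q => dftOmega M ^ ((p : ℕ) * (q : ℕ))

/-! Folding the length-`2^J` DFT at the frequencies `2^{J-j-1}(2k+1)` gives the length-`2^{j+1}`
DFT of `x^(j+1)` at odd frequencies, which is the length-`2^j` DFT of the twiddled difference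
`z_ℓ = ω_{2^{j+1}}^ℓ (x^(j+1)_ℓ - x^(j+1)_{ℓ+2^j})`, because `ω_{2^{j+1}}^{2^j} = -1`.
Inverting `F_{2^j}` recovers this difference, while `x^(j)_ℓ` is the corresponding sum. -/

open Matrix

lemma dftOmega_ne_zero (M : ℕ) : dftOmega M ≠ 0 := Complex.exp_ne_zero _

lemma isPrimitiveRoot_dftOmega {M : ℕ} (hM : M ≠ 0) : IsPrimitiveRoot (dftOmega M) M := by
  have h : dftOmega M = (Complex.exp (2 * Real.pi * Complex.I / M))⁻¹ := by
    rw [dftOmega, ← Complex.exp_neg]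
    ring_nf
  exact h ▸ (Complex.isPrimitiveRoot_exp M hM).inv

lemma dftOmega_pow_self {M : ℕ} (hM : M ≠ 0) : dftOmega M ^ M = 1 :=
  (isPrimitiveRoot_dftOmega hM).pow_eq_one

lemma dftOmega_mul_pow {a : ℕ} (M : ℕ) (ha : a ≠ 0) : dftOmega (M * a) ^ a = dftOmega M := by
  have ha' : (a : ℂ) ≠ 0 := Nat.cast_ne_zero.mpr ha
  rw [dftOmega, dftOmega, ← Complex.exp_nat_mul, Nat.cast_mul, mul_div_assoc',
    mul_comm (M : ℂ), ← div_div, mul_div_cancel_left₀ _ ha']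

lemma dftOmega_two_mul_pow_self {M : ℕ} (hM : M ≠ 0) : dftOmega (2 * M) ^ M = -1 := by
  have h := (isPrimitiveRoot_dftOmega (mul_ne_zero two_ne_zero hM)).pow_of_dvd hM
    (dvd_mul_left M 2)
  rw [Nat.mul_div_cancel _ (Nat.pos_of_ne_zero hM)] at h
  exact h.eq_neg_one_of_two_right

lemma fourierMatrix_eq_vandermonde (M : ℕ) :
    fourierMatrix M = vandermonde fun p : Fin M => dftOmega M ^ (p : ℕ) := by
  ext p q
  simp only [fourierMatrix, vandermonde_apply, pow_mul]

lemma isUnit_det_fourierMatrix {M : ℕ} (hM : M ≠ 0) : IsUnit (fourierMatrix M).det := by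
  rw [isUnit_iff_ne_zero, fourierMatrix_eq_vandermonde, det_vandermonde_ne_zero_iff]
  intro p q hpq
  exact Fin.ext ((isPrimitiveRoot_dftOmega hM).pow_inj p.isLt q.isLt hpq)

lemma inv_fourierMatrix_mulVec_fourierMatrix_mulVec {M : ℕ} (hM : M ≠ 0) (z : Fin M → ℂ) :
    (fourierMatrix M)⁻¹ *ᵥ (fourierMatrix M *ᵥ z) = z := by
  rw [mulVec_mulVec, nonsing_inv_mul _ (isUnit_det_fourierMatrix hM),
    one_mulVec]

lemma fourierMatrix_mulVec_apply (M : ℕ) (v : ℕ → ℂ) (k : Fin M) :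
    (fourierMatrix M *ᵥ fun s : Fin M => v s) k = dft M v k := by
  simp only [mulVec, dotProduct, fourierMatrix, dft]
  exact Fin.sum_univ_eq_sum_range (fun s => dftOmega M ^ ((k : ℕ) * s) * v s) M

lemma sum_range_mul {β : Type*} [AddCommMonoid β] (f : ℕ → β) (M a : ℕ) :
    ∑ r ∈ range (M * a), f r = ∑ t ∈ range a, ∑ s ∈ range M, f (M * t + s) := by
  induction a with
  | zero => simp
  | succ a ih => rw [Nat.mul_succ, Finset.sum_range_add, ih, Finset.sum_range_succ]

lemma dft_mul_mul {M a : ℕ} (hM : M ≠ 0) (ha : a ≠ 0) (v : ℕ → ℂ) (m : ℕ) :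
    dft (M * a) v (a * m) = dft M (fun s => ∑ t ∈ range a, v (s + M * t)) m := by
  simp only [dft, Finset.mul_sum]
  rw [sum_range_mul, Finset.sum_comm]
  refine Finset.sum_congr rfl fun s _ => Finset.sum_congr rfl fun t _ => ?_
  have hexp : a * m * (M * t + s) = M * a * (m * t) + a * (m * s) := by ring
  rw [hexp, pow_add, pow_mul, dftOmega_pow_self (mul_ne_zero hM ha), one_pow, one_mul,
    pow_mul, dftOmega_mul_pow M ha, add_comm (M * t)]

lemma dft_periodization {J j : ℕ} (hj : j ≤ J) (x : ℕ → ℝ) (m : ℕ) :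
    dft (2 ^ J) (fun n => (x n : ℂ)) (2 ^ (J - j) * m)
      = dft (2 ^ j) (fun s => (periodization J j x s : ℂ)) m := by
  rw [← pow_mul_pow_sub 2 hj, dft_mul_mul (by positivity) (by positivity)]
  simp only [periodization, Complex.ofReal_sum]

lemma dft_two_mul_odd {M : ℕ} (hM : M ≠ 0) (v : ℕ → ℂ) (k : ℕ) :
    dft (2 * M) v (2 * k + 1)
      = dft M (fun s => dftOmega (2 * M) ^ s * (v s - v (s + M))) k := by
  have hω : ∀ s, dftOmega (2 * M) ^ ((2 * k + 1) * s)
      = dftOmega M ^ (k * s) * dftOmega (2 * M) ^ s := by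
    intro s
    rw [show (2 * k + 1) * s = 2 * (k * s) + s by ring, pow_add, pow_mul, mul_comm 2 M,
      dftOmega_mul_pow M two_ne_zero]
  have hshift : ∀ s, dftOmega (2 * M) ^ ((2 * k + 1) * (M + s))
      = -dftOmega (2 * M) ^ ((2 * k + 1) * s) := by
    intro s
    rw [mul_add, pow_add, mul_comm (2 * k + 1) M, pow_mul, dftOmega_two_mul_pow_self hM,
      Odd.neg_one_pow (odd_two_mul_add_one k), neg_one_mul]
  simp only [dft]
  rw [show range (2 * M) = range (M + M) by rw [two_mul], Finset.sum_range_add,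
    ← Finset.sum_add_distrib]
  refine Finset.sum_congr rfl fun s _ => ?_
  rw [hshift, hω, add_comm M s]
  ring

lemma periodization_eq_add {J j : ℕ} (hj : j < J) (x : ℕ → ℝ) (k : ℕ) :
    periodization J j x k
      = periodization J (j + 1) x k + periodization J (j + 1) x (k + 2 ^ j) := by
  have hlen : 2 ^ (J - j) = 2 * 2 ^ (J - (j + 1)) := by
    rw [← pow_succ']
    congr 1
    omega
  simp only [periodization]
  rw [hlen, sum_range_mul, ← Finset.sum_add_distrib]
  refine Finset.sum_congr rfl fun t _ => ?_
  simp only [Finset.sum_range_succ, Finset.sum_range_zero, zero_add]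
  congr 2 <;> ring

/-- with `y^(j)_k = x̂_{2^{J-j-1}(2k+1)}`, the first half of `x^(j+1)` is
`x_0^(j+1) = (1/2)(diag(ω_{2^{j+1}}^{-ℓ}) F_{2^j}^{-1} y^(j) + x^(j))`,
and the second half is `x_1^(j+1) = x^(j) − x_0^(j+1)`. -/
theorem periodization_first_half_recovery (J : ℕ) (x : ℕ → ℝ)
    (j : ℕ) (hj : j + 1 ≤ J)
    (y : Fin (2 ^ j) → ℂ)
    (hy : ∀ k : Fin (2 ^ j),
      y k = dft (2 ^ J) (fun n => (x n : ℂ)) (2 ^ (J - j - 1) * (2 * (k : ℕ) + 1))) :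
    (∀ ℓ : Fin (2 ^ j),
      (periodization J (j + 1) x (ℓ : ℕ) : ℂ)
        = (1 / 2) * ((dftOmega (2 ^ (j + 1)) ^ (ℓ : ℕ))⁻¹ *
            ((fourierMatrix (2 ^ j))⁻¹.mulVec y ℓ) + (periodization J j x (ℓ : ℕ) : ℂ))) ∧
    (∀ ℓ : Fin (2 ^ j),
      periodization J (j + 1) x ((ℓ : ℕ) + 2 ^ j)
        = periodization J j x (ℓ : ℕ) - periodization J (j + 1) x (ℓ : ℕ)) := by
  set v : ℕ → ℂ := fun n => (periodization J (j + 1) x n : ℂ)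
  set z : Fin (2 ^ j) → ℂ :=
    fun s => dftOmega (2 ^ (j + 1)) ^ (s : ℕ) * (v s - v (s + 2 ^ j))
  have hyz : y = fourierMatrix (2 ^ j) *ᵥ z := by
    funext k
    rw [hy, show J - j - 1 = J - (j + 1) by omega, dft_periodization hj, pow_succ',
      dft_two_mul_odd (by positivity), ← fourierMatrix_mulVec_apply, ← pow_succ']
  have hsum (ℓ : ℕ) := periodization_eq_add (Nat.lt_of_succ_le hj) x ℓ
  refine ⟨fun ℓ => ?_, fun ℓ => by linarith [hsum ℓ]⟩
  rw [hyz, inv_fourierMatrix_mulVec_fourierMatrix_mulVec (by positivity),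
    inv_mul_cancel_left₀ (pow_ne_zero _ (dftOmega_ne_zero _)), hsum, Complex.ofReal_add]
  ring
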